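/- arXiv:2305.06635 — 2 statements merged into one kernel-verified Lean document; each statement's English description precedes it below -/
import Mathlib

section
/- Among all nonnegative power allocations p : Fin K × Fin M → ℝ with fixed per-symbol totals ∑_k p(k,m) = q(m), the uniform-in-frequency allocation p(k,m) = q(m)/K minimizes the quantity ∑_{(n,v) ≠ (0,0), n ≠ 0} exp(−(|r_{0,0}| − |r_{n,v}|)/(2σ²)), where r_{n,v} = ∑_{k,m} p(k,m) e^{2πi nk/K} e^{−2πi(v−ε)m/M}, for every fixed ε and σ > 0. Specifically, for terms with n ≠ 0, the uniform allocation achieves |r_{n,v}| = 0, which is the minimum possible value, while r_{0,0} = ∑_m q(m) e^{2πi ε m/M} is independent of the per-subcarrier split. -/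
open Complex Real

/-- Discrete OFDM ambiguity function with power allocation `p` across `K` subcarriers
and `M` symbols, fractional Doppler `ε`, delay bin `n` and Doppler bin `v`. -/
noncomputable def af (K M : ℕ) (p : Fin K × Fin M → ℝ) (ε : ℝ) (n v : ℤ) : ℂ :=
  ∑ km : Fin K × Fin M, (p km : ℂ) *
    Complex.exp (2 * Real.pi * Complex.I * n * (km.1 : ℕ) / K) *
    Complex.exp (-(2 * Real.pi * Complex.I) * ((v : ℂ) - ε) * (km.2 : ℕ) / M)

lemma sum_exp_root_zero (K : ℕ) (hK : 1 ≤ K) (n : ℤ) (h1 : 1 ≤ n) (h2 : n ≤ (K : ℤ) - 1) :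
    ∑ k : Fin K, Complex.exp (2 * Real.pi * Complex.I * n * (k : ℕ) / K) = 0 := by
  have hK0 : (K : ℂ) ≠ 0 := Nat.cast_ne_zero.2 (by omega)
  set ζ : ℂ := Complex.exp (2 * Real.pi * Complex.I * n / K) with hζ
  have hterm : ∀ k : Fin K, Complex.exp (2 * Real.pi * Complex.I * n * (k : ℕ) / K) = ζ ^ (k : ℕ) := by
    intro k
    rw [hζ, ← Complex.exp_nat_mul]
    congr 1
    ring
  have hζ1 : ζ ≠ 1 := by
    rw [hζ, Ne, Complex.exp_eq_one_iff]
    rintro ⟨m, hm⟩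
    have h2pi : (2 * Real.pi * Complex.I : ℂ) ≠ 0 := by
      simp [Real.pi_ne_zero, Complex.I_ne_zero]
    have h' : (2 * Real.pi * Complex.I : ℂ) * ((n : ℂ) / K) = (2 * Real.pi * Complex.I) * m := by
      linear_combination hm
    have hdiv : (n : ℂ) / K = m := mul_left_cancel₀ h2pi h'
    have hnc : (n : ℂ) = m * K := by
      field_simp at hdiv
      linear_combination hdiv
    have hnz : n = m * (K : ℤ) := by exact_mod_cast hnc
    have hKz : (1 : ℤ) ≤ K := by exact_mod_cast hK
    rcases le_or_gt m 0 with hm0 | hm0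
    · nlinarith
    · have hm1 : 1 ≤ m := hm0
      nlinarith
  have hζK : ζ ^ K = 1 := by
    rw [hζ, ← Complex.exp_nat_mul]
    have : (K : ℂ) * (2 * Real.pi * Complex.I * n / K) = n * (2 * Real.pi * Complex.I) := by
      field_simp
    rw [this, Complex.exp_int_mul_two_pi_mul_I]
  simp_rw [hterm]
  rw [Fin.sum_univ_eq_sum_range, geom_sum_eq hζ1, hζK]
  simp

lemma af_zero_zero (K M : ℕ) (hK : 1 ≤ K) (p : Fin K × Fin M → ℝ) (q : Fin M → ℝ)
    (hsum : ∀ m, ∑ k : Fin K, p (k, m) = q m) (ε : ℝ) :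
    af K M p ε 0 0 = ∑ m : Fin M, (q m : ℂ) *
      Complex.exp (2 * Real.pi * Complex.I * (ε : ℂ) * (m : ℕ) / M) := by
  rw [af, Fintype.sum_prod_type, Finset.sum_comm]
  refine Finset.sum_congr rfl fun m _ => ?_
  have hterm : ∀ k : Fin K, ((p (k, m) : ℝ) : ℂ) *
      Complex.exp (2 * Real.pi * Complex.I * ((0 : ℤ) : ℂ) * (k : ℕ) / K) *
      Complex.exp (-(2 * Real.pi * Complex.I) * (((0 : ℤ) : ℂ) - ε) * (m : ℕ) / M)
      = (p (k, m) : ℂ) * Complex.exp (2 * Real.pi * Complex.I * (ε : ℂ) * (m : ℕ) / M) := by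
    intro k
    have h1 : (2 * Real.pi * Complex.I * ((0 : ℤ) : ℂ) * (k : ℕ) / K : ℂ) = 0 := by
      push_cast; ring
    have h2 : (-(2 * Real.pi * Complex.I) * (((0 : ℤ) : ℂ) - ε) * (m : ℕ) / M : ℂ)
        = 2 * Real.pi * Complex.I * (ε : ℂ) * (m : ℕ) / M := by
      push_cast; ring
    rw [h1, h2, Complex.exp_zero, mul_one]
  simp_rw [hterm, ← Finset.sum_mul]
  congr 1
  rw [← Complex.ofReal_sum]
  norm_cast
  exact hsum m

theorem uniform_minimizes_sidelobe_bound (K M K_G : ℕ) (hK : 1 ≤ K) (hM : 1 ≤ M)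
    (hKG : K_G ≤ K) (q : Fin M → ℝ) (hq0 : ∀ m, 0 ≤ q m) (ε σ : ℝ) (hσ : 0 < σ)
    (hε1 : -(1/2 : ℝ) < ε) (hε2 : ε < 1/2)
    (p : Fin K × Fin M → ℝ) (hp : ∀ km, 0 ≤ p km)
    (hsum : ∀ m, ∑ k : Fin K, p (k, m) = q m) :
    (∀ n v : ℤ, 1 ≤ n → n ≤ (K : ℤ) - 1 →
      ‖af K M (fun km => q km.2 / K) ε n v‖ = 0) ∧
    (af K M (fun km => q km.2 / K) ε 0 0 =
      ∑ m : Fin M, (q m : ℂ) *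
        Complex.exp (2 * Real.pi * Complex.I * (ε : ℂ) * (m : ℕ) / M)) ∧
    (∑ nv ∈ Finset.Icc (1 : ℤ) ((K_G : ℤ) - 1) ×ˢ
        Finset.Icc (-((M : ℤ) / 2)) ((M : ℤ) / 2 - 1),
        Real.exp (-(‖af K M (fun km => q km.2 / K) ε 0 0‖
            - ‖af K M (fun km => q km.2 / K) ε nv.1 nv.2‖) / (2 * σ ^ 2))
      ≤ ∑ nv ∈ Finset.Icc (1 : ℤ) ((K_G : ℤ) - 1) ×ˢ
        Finset.Icc (-((M : ℤ) / 2)) ((M : ℤ) / 2 - 1),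
        Real.exp (-(‖af K M p ε 0 0‖
            - ‖af K M p ε nv.1 nv.2‖) / (2 * σ ^ 2))) := by
  have hK0 : (K : ℂ) ≠ 0 := Nat.cast_ne_zero.2 (by omega)
  have hKR : (K : ℝ) ≠ 0 := Nat.cast_ne_zero.2 (by omega)
  -- Part 1
  have part1 : ∀ n v : ℤ, 1 ≤ n → n ≤ (K : ℤ) - 1 →
      ‖af K M (fun km => q km.2 / K) ε n v‖ = 0 := by
    intro n v h1 h2
    have hfac : af K M (fun km => q km.2 / K) ε n v
        = (∑ k : Fin K, Complex.exp (2 * Real.pi * Complex.I * n * (k : ℕ) / K)) *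
          (∑ m : Fin M, ((q m / K : ℝ) : ℂ) *
            Complex.exp (-(2 * Real.pi * Complex.I) * ((v : ℂ) - ε) * (m : ℕ) / M)) := by
      rw [af, Fintype.sum_prod_type, Finset.sum_mul]
      refine Finset.sum_congr rfl fun k _ => ?_
      rw [Finset.mul_sum]
      refine Finset.sum_congr rfl fun m _ => ?_
      ring
    rw [hfac, sum_exp_root_zero K hK n h1 h2, zero_mul, norm_zero]
  -- uniform sums to q too
  have hsumu : ∀ m, ∑ k : Fin K, (fun km : Fin K × Fin M => q km.2 / K) (k, m) = q m := by
    intro m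
    simp only
    rw [Finset.sum_const, Finset.card_univ, Fintype.card_fin, nsmul_eq_mul]
    field_simp
  have part2 := af_zero_zero K M hK (fun km : Fin K × Fin M => q km.2 / (K : ℝ)) q hsumu ε
  refine ⟨part1, part2, ?_⟩
  -- Part 3
  have habs00 : ‖af K M (fun km => q km.2 / K) ε 0 0‖
      = ‖af K M p ε 0 0‖ := by
    rw [part2, af_zero_zero K M hK p q hsum ε]
  refine Finset.sum_le_sum fun nv hnv => ?_
  obtain ⟨hn, hv⟩ := Finset.mem_product.1 hnv
  obtain ⟨hn1, hn2⟩ := Finset.mem_Icc.1 hn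
  have hn2' : nv.1 ≤ (K : ℤ) - 1 := by
    have : (K_G : ℤ) ≤ K := by exact_mod_cast hKG
    omega
  rw [part1 nv.1 nv.2 hn1 hn2', habs00]
  apply Real.exp_le_exp.2
  apply div_le_div_of_nonneg_right ?_ (by positivity)
  have := norm_nonneg (af K M p ε nv.1 nv.2)
  linarith
end

section
/- The function g(t) = log(1 + a(eᵗ − 1)) is concave on [0, ∞) for any a ≥ 1. -/
theorem log_exp_concave (a : ℝ) (ha : 1 ≤ a) :
    ConcaveOn ℝ (Set.Ici (0 : ℝ))
      (fun t => Real.log (1 + a * (Real.exp t - 1))) := by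
  have ha0 : (0:ℝ) < a := lt_of_lt_of_le one_pos ha
  have hu : ∀ t ∈ Set.Ici (0:ℝ), 0 < 1 + a * (Real.exp t - 1) := by
    intro t ht
    have : (0:ℝ) ≤ a * (Real.exp t - 1) := by
      have : (1:ℝ) ≤ Real.exp t := Real.one_le_exp ht
      nlinarith
    linarith
  have hint : interior (Set.Ici (0:ℝ)) = Set.Ioi 0 := interior_Ici
  refine concaveOn_of_hasDerivWithinAt2_nonpos (convex_Ici 0)
    (f' := fun t => a * Real.exp t / (1 + a * (Real.exp t - 1)))
    (f'' := fun t => (a * Real.exp t * (1 + a * (Real.exp t - 1)) -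
      a * Real.exp t * (a * Real.exp t)) / (1 + a * (Real.exp t - 1))^2)
    ?_ ?_ ?_ ?_
  · apply ContinuousOn.log
    · fun_prop
    · intro t ht; exact (hu t ht).ne'
  · intro x hx
    rw [hint] at hx
    have hx0 : (0:ℝ) ≤ x := le_of_lt hx
    have hD : HasDerivAt (fun t => 1 + a * (Real.exp t - 1)) (a * Real.exp x) x := by
      simpa using ((Real.hasDerivAt_exp x).sub_const 1).const_mul a |>.const_add 1
    exact ((hD.log (hu x hx0).ne')).hasDerivWithinAt
  · intro x hx
    rw [hint] at hx
    have hx0 : (0:ℝ) ≤ x := le_of_lt hx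
    have hD : HasDerivAt (fun t => 1 + a * (Real.exp t - 1)) (a * Real.exp x) x := by
      simpa using ((Real.hasDerivAt_exp x).sub_const 1).const_mul a |>.const_add 1
    have hN : HasDerivAt (fun t => a * Real.exp t) (a * Real.exp x) x :=
      (Real.hasDerivAt_exp x).const_mul a
    exact (hN.div hD (hu x hx0).ne').hasDerivWithinAt
  · intro x hx
    rw [hint] at hx
    have hx0 : (0:ℝ) ≤ x := le_of_lt hx
    apply div_nonpos_of_nonpos_of_nonneg
    · have : a * Real.exp x * (1 + a * (Real.exp x - 1)) -
        a * Real.exp x * (a * Real.exp x) = a * Real.exp x * (1 - a) := by ring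
      rw [this]
      have h1 : 0 < a * Real.exp x := by positivity
      nlinarith
    · positivity
end
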